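/- Fix a real λ > 0 and a real number t, and for each N set p_N = ⌊√(λ·N)⌋. Then the limit as N → ∞ of (1 / (N choose p_N)²) · Σ_{I,J} t^(|I ∩ J|) — the sum ranging over all ordered pairs (I, J) of p_N-element subsets of Fin N — exists and equals e^(λ·(t − 1)). In particular, for t = −1 this limit equals e^(−2λ), the weight q = e^(−2λ) assigned to a crossing of two chords in the Majorana double-scaled SYK model. -/

import Mathlib

/-!
Expanding `t ^ #(I ∩ J) = ∑_{K ⊆ I ∩ J} (t - 1) ^ #K` and counting the `p`-sets that contain a
given `K` turns the normalized sum into the finite series `∑ₖ C(p,k)² / C(N,k) · (t - 1)ᵏ`; its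
`k`-th coefficient is the binomial moment `E[C(#(I ∩ J), k)]` of the hypergeometric overlap.
When `p² / N → λ` each coefficient tends to `λᵏ / k!` and is bounded by `(p² / N)ᵏ / k!`, so by
dominated convergence the series tends to the exponential series of `λ (t - 1)`.
-/

open Finset Filter Topology Asymptotics

namespace Finset

variable {α : Type*} [Fintype α] [DecidableEq α]

theorem sum_sum_add_one_pow_card_inter {R : Type*} [CommSemiring R] (S : Finset (Finset α))
    (x : R) :
    ∑ I ∈ S, ∑ J ∈ S, (x + 1) ^ #(I ∩ J) = ∑ K : Finset α, x ^ #K * #{I ∈ S | K ⊆ I} ^ 2 := by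
  have h_binom (s : Finset α) : (x + 1) ^ #s = ∑ K ∈ s.powerset, x ^ #K := by
    simp [← sum_pow_mul_eq_add_pow]
  simp only [h_binom, ← sum_product']
  rw [sum_comm' (t' := univ) (s' := fun K => {I ∈ S | K ⊆ I} ×ˢ {I ∈ S | K ⊆ I})]
  · simp [sq, mul_comm]
  · intro IJ K
    simp only [mem_product, mem_filter, mem_powerset, subset_inter_iff, mem_univ, and_true]
    tauto

theorem card_filter_powersetCard_univ_subset_mul_choose (p : ℕ) (K : Finset α) :
    #{I ∈ powersetCard p (univ : Finset α) | K ⊆ I} * (Fintype.card α).choose #K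
      = (Fintype.card α).choose p * p.choose #K := by
  by_cases hK : #K ≤ p
  · rw [card_filter_powersetCard_subset K univ p (subset_univ K) hK, card_univ, mul_comm]
    exact (Nat.choose_mul hK).symm
  · have h_empty : {I ∈ powersetCard p (univ : Finset α) | K ⊆ I} = ∅ := by
      refine filter_eq_empty_iff.2 fun I hI hKI => hK ?_
      exact (mem_powersetCard_univ.1 hI) ▸ card_le_card hKI
    simp [h_empty, Nat.choose_eq_zero_of_lt (not_le.1 hK)]

end Finset

noncomputable def overlapMoment (N p k : ℕ) : ℝ := (p.choose k : ℝ) ^ 2 / N.choose k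

open Fintype in
theorem sum_sum_add_one_pow_card_inter_powersetCard_div {α : Type*} [Fintype α] [DecidableEq α]
    {p : ℕ} (hp : p ≤ card α) (x : ℝ) :
    (∑ I ∈ powersetCard p (univ : Finset α), ∑ J ∈ powersetCard p univ, (x + 1) ^ #(I ∩ J))
        / ((card α).choose p : ℝ) ^ 2
      = ∑ k ∈ range (card α + 1), overlapMoment (card α) p k * x ^ k := by
  have hp_pos : ((card α).choose p : ℝ) ≠ 0 := by exact_mod_cast (Nat.choose_pos hp).ne'
  have h_count (K : Finset α) : (#{I ∈ powersetCard p (univ : Finset α) | K ⊆ I} : ℝ)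
      = (card α).choose p * p.choose #K / (card α).choose #K := by
    have hK : ((card α).choose #K : ℝ) ≠ 0 := by
      exact_mod_cast (Nat.choose_pos (card_le_univ K)).ne'
    rw [eq_div_iff hK]
    exact_mod_cast card_filter_powersetCard_univ_subset_mul_choose p K
  rw [sum_sum_add_one_pow_card_inter, sum_div]
  simp only [h_count]
  rw [← powerset_univ, sum_powerset_apply_card
    (fun k => x ^ k * ((card α).choose p * p.choose k / (card α).choose k : ℝ) ^ 2
      / ((card α).choose p : ℝ) ^ 2), card_univ]
  refine sum_congr rfl fun k hk => ?_
  have hk : ((card α).choose k : ℝ) ≠ 0 := by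
    exact_mod_cast (Nat.choose_pos (Nat.lt_succ_iff.1 (mem_range.1 hk))).ne'
  rw [overlapMoment, nsmul_eq_mul]
  field_simp

theorem Nat.descFactorial_mul_pow_le {p N : ℕ} (h : p ≤ N) (k : ℕ) :
    p.descFactorial k * N ^ k ≤ N.descFactorial k * p ^ k := by
  induction k with
  | zero => simp
  | succ k ih =>
    have h_factor : (p - k) * N ≤ (N - k) * p := by
      rw [Nat.sub_mul, Nat.sub_mul, mul_comm N p]
      exact Nat.sub_le_sub_left (Nat.mul_le_mul_left k h) _
    calc p.descFactorial (k + 1) * N ^ (k + 1)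
        = ((p - k) * N) * (p.descFactorial k * N ^ k) := by
          rw [Nat.descFactorial_succ, pow_succ]; ring
      _ ≤ ((N - k) * p) * (N.descFactorial k * p ^ k) := Nat.mul_le_mul h_factor ih
      _ = N.descFactorial (k + 1) * p ^ (k + 1) := by
          rw [Nat.descFactorial_succ, pow_succ]; ring

theorem Nat.choose_mul_pow_le {p N : ℕ} (h : p ≤ N) (k : ℕ) :
    p.choose k * N ^ k ≤ N.choose k * p ^ k := by
  refine Nat.le_of_mul_le_mul_left ?_ k.factorial_pos
  simpa only [← mul_assoc, ← Nat.descFactorial_eq_factorial_mul_choose]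
    using Nat.descFactorial_mul_pow_le h k

theorem overlapMoment_eq_zero_of_lt {N p k : ℕ} (h : p < k) : overlapMoment N p k = 0 := by
  simp [overlapMoment, Nat.choose_eq_zero_of_lt h]

theorem overlapMoment_nonneg (N p k : ℕ) : 0 ≤ overlapMoment N p k := by
  unfold overlapMoment; positivity

theorem overlapMoment_le {N p : ℕ} (h : p ≤ N) (k : ℕ) :
    overlapMoment N p k ≤ ((p : ℝ) ^ 2 / N) ^ k / k.factorial := by
  rcases Nat.eq_zero_or_pos (N.choose k) with hNk | hNk
  · simp only [overlapMoment, hNk, Nat.cast_zero, div_zero]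
    positivity
  have hN : (0 : ℝ) < (N : ℝ) ^ k := by
    rcases Nat.eq_zero_or_pos N with rfl | hN
    · obtain rfl : k = 0 := by
        by_contra hk
        simp [Nat.choose_eq_zero_of_lt (Nat.pos_of_ne_zero hk)] at hNk
      simp
    · positivity
  have h_ratio : (p.choose k : ℝ) / N.choose k ≤ (p : ℝ) ^ k / (N : ℝ) ^ k := by
    rw [div_le_div_iff₀ (by exact_mod_cast hNk) hN, mul_comm ((p : ℝ) ^ k)]
    exact_mod_cast Nat.choose_mul_pow_le h k
  calc overlapMoment N p k = p.choose k * ((p.choose k : ℝ) / N.choose k) := by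
        rw [overlapMoment, sq, mul_div_assoc]
    _ ≤ (p : ℝ) ^ k / k.factorial * ((p : ℝ) ^ k / (N : ℝ) ^ k) :=
        mul_le_mul (Nat.choose_le_pow_div k p) h_ratio (by positivity) (by positivity)
    _ = ((p : ℝ) ^ 2 / N) ^ k / k.factorial := by
        rw [div_pow, ← pow_mul, mul_comm 2 k, pow_mul]; ring

section

variable {p : ℕ → ℕ} {lam : ℝ}

theorem tendsto_overlapMoment (hp : Tendsto p atTop atTop)
    (hsq : Tendsto (fun N => (p N : ℝ) ^ 2 / N) atTop (𝓝 lam)) (k : ℕ) :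
    Tendsto (fun N => overlapMoment N (p N) k) atTop (𝓝 (lam ^ k / k.factorial)) := by
  have h_equiv : (fun N => ((p N : ℝ) ^ 2 / N) ^ k / k.factorial)
      ~[atTop] fun N => overlapMoment N (p N) k := by
    refine ((((isEquivalent_choose k).comp_tendsto hp).pow 2).div
      (isEquivalent_choose k)).symm.congr_left ?_
    filter_upwards [eventually_ge_atTop 1] with N hN
    have hN : (N : ℝ) ≠ 0 := by exact_mod_cast Nat.one_le_iff_ne_zero.1 hN
    simp only [Pi.div_apply, Pi.pow_apply, Function.comp_apply]
    rw [div_pow, div_pow, ← pow_mul, mul_comm k 2, pow_mul]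
    field_simp
  exact h_equiv.tendsto_nhds ((hsq.pow k).div_const _)

theorem eventually_le_of_tendsto_sq_div (hp : Tendsto p atTop atTop)
    (hsq : Tendsto (fun N => (p N : ℝ) ^ 2 / N) atTop (𝓝 lam)) : ∀ᶠ N in atTop, p N ≤ N := by
  have hlam : 0 ≤ lam := ge_of_tendsto hsq (Eventually.of_forall fun N => by positivity)
  have hp_real : Tendsto (fun N => (p N : ℝ)) atTop atTop :=
    tendsto_natCast_atTop_atTop.comp hp
  filter_upwards [hsq.eventually (eventually_le_nhds (lt_add_one lam)),
    hp_real.eventually_ge_atTop (lam + 1), eventually_ge_atTop 1] with N h_sq h_large hN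
  have hN : (0 : ℝ) < N := by exact_mod_cast hN
  rw [div_le_iff₀ hN] at h_sq
  have : (p N : ℝ) ≤ N := le_of_mul_le_mul_left (a := lam + 1) (by nlinarith) (by linarith)
  exact_mod_cast this

theorem tendsto_tsum_overlapMoment_mul_pow (hp : Tendsto p atTop atTop)
    (hsq : Tendsto (fun N => (p N : ℝ) ^ 2 / N) atTop (𝓝 lam)) (x : ℝ) :
    Tendsto (fun N => ∑' k, overlapMoment N (p N) k * x ^ k) atTop
      (𝓝 (Real.exp (lam * x))) := by
  have h_exp : ∑' k : ℕ, lam ^ k / k.factorial * x ^ k = Real.exp (lam * x) := by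
    rw [Real.exp_eq_exp_ℝ, ← (NormedSpace.expSeries_div_hasSum_exp (lam * x)).tsum_eq]
    exact tsum_congr fun k => by ring
  rw [← h_exp]
  refine tendsto_tsum_of_dominated_convergence
    (Real.summable_pow_div_factorial ((lam + 1) * |x|))
    (fun k => (tendsto_overlapMoment hp hsq k).mul_const _) ?_
  filter_upwards [eventually_le_of_tendsto_sq_div hp hsq,
    hsq.eventually (eventually_le_nhds (lt_add_one lam))] with N hpN h_sq k
  rw [norm_mul, Real.norm_of_nonneg (overlapMoment_nonneg _ _ _), norm_pow, Real.norm_eq_abs,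
    mul_pow, mul_div_right_comm]
  gcongr
  exact (overlapMoment_le hpN k).trans (by gcongr)

end

theorem sq_sub_two_mul_le_natFloor_sq {s : ℝ} (hs : 0 ≤ s) : s ^ 2 - 2 * s ≤ (⌊s⌋₊ : ℝ) ^ 2 := by
  have h_floor := Nat.lt_floor_add_one s
  rcases le_or_gt 1 s with hs1 | hs1
  · nlinarith
  · nlinarith [Nat.cast_nonneg (α := ℝ) ⌊s⌋₊]

theorem tendsto_sqrt_mul_div_atTop {lam : ℝ} (hlam : 0 ≤ lam) :
    Tendsto (fun N : ℕ => √(lam * N) / N) atTop (𝓝 0) := by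
  have h := (Real.continuous_sqrt.tendsto 0).comp (tendsto_const_div_atTop_nhds_zero_nat lam)
  rw [Real.sqrt_zero] at h
  refine h.congr' ?_
  filter_upwards [eventually_gt_atTop 0] with N hN
  have hN : (0 : ℝ) < N := by exact_mod_cast hN
  rw [Function.comp_apply, Real.sqrt_div' _ hN.le, Real.sqrt_mul hlam, mul_div_assoc,
    Real.sqrt_div_self', mul_one_div]

theorem tendsto_natFloor_sqrt_mul_atTop {lam : ℝ} (hlam : 0 < lam) :
    Tendsto (fun N : ℕ => ⌊√(lam * N)⌋₊) atTop atTop :=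
  tendsto_nat_floor_atTop.comp <| Real.tendsto_sqrt_atTop.comp <|
    tendsto_natCast_atTop_atTop.const_mul_atTop hlam

theorem tendsto_natFloor_sqrt_mul_sq_div {lam : ℝ} (hlam : 0 ≤ lam) :
    Tendsto (fun N : ℕ => (⌊√(lam * N)⌋₊ : ℝ) ^ 2 / N) atTop (𝓝 lam) := by
  have h_lower : Tendsto (fun N : ℕ => lam - 2 * (√(lam * N) / N)) atTop (𝓝 lam) := by
    simpa using tendsto_const_nhds.sub ((tendsto_sqrt_mul_div_atTop hlam).const_mul 2)
  have h_bounds : ∀ᶠ N : ℕ in atTop, lam - 2 * (√(lam * N) / N) ≤ (⌊√(lam * N)⌋₊ : ℝ) ^ 2 / N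
      ∧ (⌊√(lam * N)⌋₊ : ℝ) ^ 2 / N ≤ lam := by
    filter_upwards [eventually_gt_atTop 0] with N hN
    have hN : (0 : ℝ) < N := by exact_mod_cast hN
    have h_sq : √(lam * N) ^ 2 = lam * N := Real.sq_sqrt (by positivity)
    constructor
    · calc lam - 2 * (√(lam * N) / N) = (√(lam * N) ^ 2 - 2 * √(lam * N)) / N := by
            rw [h_sq]; field_simp
        _ ≤ (⌊√(lam * N)⌋₊ : ℝ) ^ 2 / N := by
            gcongr; exact sq_sub_two_mul_le_natFloor_sq (Real.sqrt_nonneg _)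
    · rw [div_le_iff₀ hN]
      refine le_of_le_of_eq ?_ h_sq
      exact pow_le_pow_left₀ (Nat.cast_nonneg _) (Nat.floor_le (Real.sqrt_nonneg _)) 2
  exact tendsto_of_tendsto_of_tendsto_of_le_of_le' h_lower tendsto_const_nhds
    (h_bounds.mono fun _ => And.left) (h_bounds.mono fun _ => And.right)

/-- In the double scaling limit (`p_N = ⌊√(λN)⌋`, `N → ∞`), the normalized weighted sum
`Σ_{I,J} t^(|I ∩ J|) / (N choose p_N)²` over ordered pairs of `p_N`-element subsets of
`Fin N` tends to `e^(λ(t−1))`.  (For `t = −1` this is the crossing weight `q = e^(−2λ)`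
of the Majorana double-scaled SYK model.) -/
theorem chord_pair_weight_limit (lam t : ℝ) (hlam : 0 < lam) :
    Filter.Tendsto
      (fun N : ℕ =>
        let p := ⌊Real.sqrt (lam * N)⌋₊
        let S := (Finset.univ : Finset (Fin N)).powersetCard p
        (∑ I ∈ S, ∑ J ∈ S, t ^ (I ∩ J).card) / (N.choose p : ℝ) ^ 2)
      Filter.atTop (nhds (Real.exp (lam * (t - 1)))) := by
  have hp := tendsto_natFloor_sqrt_mul_atTop hlam
  have hsq := tendsto_natFloor_sqrt_mul_sq_div hlam.le
  refine (tendsto_tsum_overlapMoment_mul_pow hp hsq (t - 1)).congr' ?_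
  filter_upwards [eventually_le_of_tendsto_sq_div hp hsq] with N hpN
  have h_sum := sum_sum_add_one_pow_card_inter_powersetCard_div (α := Fin N)
    (hpN.trans_eq (Fintype.card_fin N).symm) (t - 1)
  rw [sub_add_cancel, Fintype.card_fin] at h_sum
  rw [h_sum]
  exact tsum_eq_sum fun k hk => by
    rw [overlapMoment_eq_zero_of_lt (hpN.trans_lt (by simpa using hk)), zero_mul]
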